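/- arXiv:1302.2531 — 2 statements merged into one kernel-verified Lean document; each statement's English description precedes it below -/
import Mathlib

section
/- Let M be an n×n real matrix all of whose eigenvalues have strictly positive real part. Then the integral C = ∫₀^∞ e^{-Ms} e^{-M*s} ds converges (where M* is the transpose of M), and C is a symmetric positive definite matrix. -/
open MeasureTheory Matrix Set NormedSpace

attribute [local instance] Matrix.linftyOpNormedAddCommGroup Matrix.linftyOpNormedSpace
  Matrix.linftyOpNormedRing Matrix.linftyOpNormedAlgebra

/-!
Over `ℂ`, every vector is a sum of generalized eigenvectors of `M`. If `(M - μ)ᵏ v = 0`, then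
`e^{-sM} v = e^{-sμ} ∑_{j<k} (-s)ʲ / j! (M - μ)ʲ v`, which is `O(e^{-as})` for every `a < Re μ`.
Taking `0 < a` below the real parts of the finitely many eigenvalues gives
`e^{-sM} = O(e^{-as})`, so the integrand `e^{-sM} (e^{-sM})ᵀ = O(e^{-2as})` is integrable on
`(0, ∞)`. Since `e^{-sM}` is invertible, each integrand is positive definite, and positive
definiteness passes to the integral because transposition and `x ↦ xᵀ C x` commute with it.
-/

open Filter Asymptotics Finset
open scoped Nat

theorem isBigO_pow_mul_exp_neg {a b : ℝ} (hab : b < a) (j : ℕ) :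
    (fun s : ℝ => s ^ j * Real.exp (-a * s)) =O[atTop] fun s => Real.exp (-b * s) := by
  refine ((isLittleO_pow_exp_pos_mul_atTop j (sub_pos.2 hab)).isBigO.mul
    (isBigO_refl (fun s => Real.exp (-a * s)) atTop)).congr_right fun s => ?_
  rw [← Real.exp_add]
  ring_nf

theorem Asymptotics.IsBigO.linearMap_comp {α 𝕜 E F G : Type*} [NontriviallyNormedField 𝕜]
    [CompleteSpace 𝕜] [NormedAddCommGroup E] [NormedSpace 𝕜 E] [FiniteDimensional 𝕜 E]
    [NormedAddCommGroup F] [NormedSpace 𝕜 F] [Norm G] {l : Filter α} {f : α → E} {g : α → G}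
    (h : f =O[l] g) (L : E →ₗ[𝕜] F) : (fun x => L (f x)) =O[l] g :=
  (L.toContinuousLinearMap.isBigO_comp f l).trans h

theorem integrableOn_Ioi_of_isBigO_exp_neg {E : Type*} [NormedAddCommGroup E] {f : ℝ → E}
    {a b : ℝ} (hb : 0 < b) (hf : Continuous f) (ho : f =O[atTop] fun x => Real.exp (-b * x)) :
    IntegrableOn f (Ioi a) :=
  (integrable_norm_iff hf.aestronglyMeasurable).1
    (integrable_of_isBigO_exp_neg hb hf.norm.continuousOn ho.norm_left)

namespace Matrix

variable {ι : Type*} [Fintype ι] [DecidableEq ι]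

theorem exp_mulVec_of_pow_mulVec_eq_zero {𝕂 : Type*} [RCLike 𝕂] (N : Matrix ι ι 𝕂)
    {v : ι → 𝕂} {k : ℕ} (hv : N ^ k *ᵥ v = 0) :
    exp N *ᵥ v = ∑ j ∈ range k, (j ! : 𝕂)⁻¹ • (N ^ j *ᵥ v) := by
  have hsum : HasSum (fun j => (j ! : 𝕂)⁻¹ • (N ^ j *ᵥ v)) (exp N *ᵥ v) := by
    simp_rw [← smul_mulVec]
    exact (exp_series_hasSum_exp' (𝕂 := 𝕂) N).map (mulVec.addMonoidHomLeft v)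
      (continuous_id.matrix_mulVec continuous_const)
  refine hsum.unique (hasSum_sum_of_ne_finset_zero fun j hj => ?_)
  rw [show j = j - k + k by grind, pow_add, ← mulVec_mulVec, hv, mulVec_zero, smul_zero]

theorem exp_smul_mulVec_of_pow_sub_mulVec_eq_zero (A : Matrix ι ι ℂ) (μ t : ℂ)
    {v : ι → ℂ} {k : ℕ} (hv : (A - μ • 1) ^ k *ᵥ v = 0) :
    exp (t • A) *ᵥ v =
      ∑ j ∈ range k, (Complex.exp (t * μ) * t ^ j) • ((j ! : ℂ)⁻¹ • ((A - μ • 1) ^ j *ᵥ v)) := by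
  have hsplit : t • A = algebraMap ℂ _ (t * μ) + t • (A - μ • 1) := by
    rw [Algebra.algebraMap_eq_smul_one]
    module
  have hnil : (t • (A - μ • 1)) ^ k *ᵥ v = 0 := by rw [smul_pow, smul_mulVec, hv, smul_zero]
  have hexp : exp (t • A) = Complex.exp (t * μ) • exp (t • (A - μ • 1)) := by
    rw [hsplit]
    exact (NormedSpace.exp_add_of_commute (Algebra.commute_algebraMap_left _ _)).trans <| by
      rw [← algebraMap_exp_comm, Algebra.algebraMap_eq_smul_one, smul_one_mul,
        Complex.exp_eq_exp_ℂ]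
      -- the two sides differ only in the (defeq) topology used to define `exp` on matrices
      rfl
  rw [hexp, smul_mulVec, exp_mulVec_of_pow_mulVec_eq_zero _ hnil, smul_sum]
  refine sum_congr rfl fun j _ => ?_
  rw [smul_pow, smul_mulVec, smul_smul, smul_smul, smul_smul]
  ring_nf

theorem isBigO_exp_neg_smul_mulVec_of_pow_sub_mulVec_eq_zero (A : Matrix ι ι ℂ) {μ : ℂ} {a : ℝ}
    (ha : a < μ.re) {v : ι → ℂ} {k : ℕ} (hv : (A - μ • 1) ^ k *ᵥ v = 0) :
    (fun s : ℝ => exp (-s • A) *ᵥ v) =O[atTop] fun s => Real.exp (-a * s) := by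
  have hformula (s : ℝ) := exp_smul_mulVec_of_pow_sub_mulVec_eq_zero A μ (-s) (v := v) hv
  simp only [← Complex.ofReal_neg, Complex.coe_smul] at hformula
  simp only [hformula]
  refine IsBigO.fun_sum fun j _ => ?_
  refine (isBigO_of_le' atTop (c := ‖(j ! : ℂ)⁻¹ • ((A - μ • 1) ^ j *ᵥ v)‖) fun s => ?_).trans
    (isBigO_pow_mul_exp_neg ha j)
  rw [norm_smul, norm_mul, Complex.norm_exp, norm_mul, norm_pow, norm_pow, Real.norm_eq_abs,
    Real.norm_of_nonneg (Real.exp_pos _).le, Complex.norm_real, Real.norm_eq_abs, abs_neg,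
    Complex.re_ofReal_mul]
  exact le_of_eq (by ring_nf)

theorem isBigO_of_forall_mulVec {m n α 𝕜 G : Type*} [Fintype m] [Fintype n] [DecidableEq n]
    [NontriviallyNormedField 𝕜] [CompleteSpace 𝕜] [SeminormedAddCommGroup G] {l : Filter α}
    {g : α → G} {f : α → Matrix m n 𝕜} (h : ∀ v, (fun x => f x *ᵥ v) =O[l] g) : f =O[l] g := by
  have hentries : (fun x i j => (f x *ᵥ Pi.single j 1) i) =O[l] g := by
    refine isBigO_pi.2 fun i => isBigO_pi.2 fun j => ?_
    exact isBigO_pi.1 (h (Pi.single j 1)) i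
  have := hentries.linearMap_comp (ofLinearEquiv 𝕜).toLinearMap
  simp only [mulVec_single_one] at this
  exact this

theorem isBigO_exp_neg_smul_mulVec (A : Matrix ι ι ℂ) {a : ℝ}
    (ha : ∀ μ ∈ spectrum ℂ A, a < μ.re) (v : ι → ℂ) :
    (fun s : ℝ => exp (-s • A) *ᵥ v) =O[atTop] fun s => Real.exp (-a * s) := by
  let S : Submodule ℂ (ι → ℂ) :=
    { carrier := {v | (fun s : ℝ => exp (-s • A) *ᵥ v) =O[atTop] fun s => Real.exp (-a * s)}
      add_mem' := fun hv hw => by simpa only [Set.mem_ofPred_eq, mulVec_add] using hv.add hw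
      zero_mem' := by simpa only [Set.mem_ofPred_eq, mulVec_zero] using isBigO_zero _ _
      smul_mem' := fun c v hv => by
        simp only [Set.mem_ofPred_eq, mulVec_smul]
        exact hv.const_smul_left c }
  have hgen (μ : ℂ) : Module.End.maxGenEigenspace (toLin' A) μ ≤ S := by
    intro w hw
    obtain ⟨k, hk⟩ := (Module.End.mem_maxGenEigenspace _ _ _).1 hw
    rw [Module.End.one_eq_id, ← toLin'_one, ← map_smul, ← map_sub, ← toLin'_pow,
      toLin'_apply] at hk
    by_cases hμ : μ ∈ spectrum ℂ A
    · exact isBigO_exp_neg_smul_mulVec_of_pow_sub_mulVec_eq_zero A (ha μ hμ) hk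
    · have hunit : IsUnit ((A - μ • 1) ^ k) := by
        refine IsUnit.pow k ?_
        simpa [Algebra.algebraMap_eq_smul_one] using (spectrum.notMem_iff.1 hμ).neg
      rw [mulVec_injective_iff_isUnit.2 hunit (hk.trans (mulVec_zero _).symm)]
      exact S.zero_mem
  have hS : ⊤ ≤ S := Module.End.iSup_maxGenEigenspace_eq_top (toLin' A) ▸ iSup_le hgen
  exact hS Submodule.mem_top

theorem exists_pos_lt_re_of_spectrum (A : Matrix ι ι ℂ) (h : ∀ μ ∈ spectrum ℂ A, 0 < μ.re) :
    ∃ a > 0, ∀ μ ∈ spectrum ℂ A, a < μ.re :=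
  (((finite_spectrum A).eventually_all.2 fun μ hμ => Ioo_mem_nhdsGT (h μ hμ)).and
    self_mem_nhdsWithin).exists.imp fun _ ha => ⟨ha.2, fun μ hμ => (ha.1 μ hμ).2⟩

theorem isBigO_exp_neg_smul_of_real (M : Matrix ι ι ℝ) {a : ℝ}
    (ha : ∀ μ ∈ spectrum ℂ (M.map (algebraMap ℝ ℂ)), a < μ.re) :
    (fun s : ℝ => exp (-s • M)) =O[atTop] fun s => Real.exp (-a * s) := by
  have hcomplex (s : ℝ) :
      exp (-s • M) = (exp (-s • M.map (algebraMap ℝ ℂ))).map Complex.re := by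
    have h := map_exp ((algebraMap ℝ ℂ).mapMatrix : Matrix ι ι ℝ →+* Matrix ι ι ℂ)
      (continuous_id.matrix_map Complex.continuous_ofReal) (-s • M)
    have hsmul : (algebraMap ℝ ℂ).mapMatrix (-s • M) = -s • M.map (algebraMap ℝ ℂ) := by
      ext
      simp
    rw [hsmul] at h
    ext i j
    have hij := congrArg (fun X => (X i j).re) h
    simp only [RingHom.mapMatrix_apply, map_apply] at hij
    exact hij
  simp only [hcomplex]
  exact (isBigO_of_forall_mulVec (isBigO_exp_neg_smul_mulVec _ ha)).linearMap_comp
    (Complex.reLm.mapMatrix : Matrix ι ι ℂ →ₗ[ℝ] Matrix ι ι ℝ)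

theorem isBigO_exp_neg_smul_mul_transpose (M : Matrix ι ι ℝ) {a : ℝ}
    (ha : ∀ μ ∈ spectrum ℂ (M.map (algebraMap ℝ ℂ)), a < μ.re) :
    (fun s : ℝ => exp (-s • M) * (exp (-s • M))ᵀ) =O[atTop] fun s => Real.exp (-(2 * a) * s) := by
  have hexp := isBigO_exp_neg_smul_of_real M ha
  refine (hexp.mul (hexp.linearMap_comp (transposeLinearEquiv ι ι ℝ ℝ).toLinearMap)).congr_right
    fun s => ?_
  rw [← Real.exp_add]
  ring_nf

theorem posDef_exp_mul_transpose (A : Matrix ι ι ℝ) : (exp A * (exp A)ᵀ).PosDef := by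
  simpa [conjTranspose_eq_transpose_of_trivial] using
    PosDef.mul_conjTranspose_self _ (vecMul_injective_iff_isUnit.2 (isUnit_exp A))

/-- Matrices carry no global norm, so the `ContinuousENorm` instance of the `L∞` operator norm
has to be supplied to `Integrable` by hand. -/
theorem PosDef.integral {α : Type*} [MeasurableSpace α] {μ : Measure α} (hμ : μ ≠ 0)
    {f : α → Matrix ι ι ℝ} (hf : @Integrable _ _ SeminormedAddGroup.toContinuousENorm _ _ f μ)
    (hpos : ∀ᵐ x ∂μ, (f x).PosDef) : (∫ x, f x ∂μ).PosDef := by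
  have hsymm : (∫ x, f x ∂μ).IsHermitian := by
    let T := (transposeLinearEquiv ι ι ℝ ℝ).toContinuousLinearEquiv
    rw [isHermitian_iff_isSymm, IsSymm]
    calc (∫ x, f x ∂μ)ᵀ = T (∫ x, f x ∂μ) := rfl
      _ = ∫ x, T (f x) ∂μ := (T.integral_comp_comm f).symm
      _ = ∫ x, f x ∂μ :=
        integral_congr_ae (hpos.mono fun x hx => isHermitian_iff_isSymm.1 hx.isHermitian)
  refine PosDef.of_dotProduct_mulVec_pos hsymm fun v hv => ?_
  let Q : Matrix ι ι ℝ →L[ℝ] ℝ := LinearMap.toContinuousLinearMap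
    ((LinearMap.applyₗ v).comp ((LinearMap.applyₗ (star v)).comp (toLinearMap₂' ℝ).toLinearMap))
  have hQ (B : Matrix ι ι ℝ) : Q B = star v ⬝ᵥ (B *ᵥ v) := by
    simp [Q, toLinearMap₂'_apply']
  have hQpos : ∀ᵐ x ∂μ, 0 < Q (f x) :=
    hpos.mono fun x hx => (hQ _).symm ▸ hx.dotProduct_mulVec_pos hv
  have hsupp : 0 < μ (Function.support fun x => Q (f x)) := by
    refine pos_iff_ne_zero.2 fun h0 => hμ (ae_eq_bot.1 (eventually_false_iff_eq_bot.1 ?_))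
    exact (hQpos.and (measure_eq_zero_iff_ae_notMem.1 h0)).mono fun x hx => hx.2 hx.1.ne'
  calc 0 < ∫ x, Q (f x) ∂μ :=
        (integral_pos_iff_support_of_nonneg_ae (hQpos.mono fun x hx => hx.le)
          (Q.integrable_comp hf)).2 hsupp
    _ = Q (∫ x, f x ∂μ) := Q.integral_comp_comm hf
    _ = star v ⬝ᵥ ((∫ x, f x ∂μ) *ᵥ v) := hQ _

end Matrix

/-- If all eigenvalues of the real `n × n` matrix `M` have strictly
positive real part, then `C = ∫₀^∞ e^{-Ms} e^{-M*s} ds` converges, and `C` is a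
symmetric positive definite matrix. -/
theorem stmt0 (n : ℕ) (M : Matrix (Fin n) (Fin n) ℝ)
    (hM : ∀ μ ∈ spectrum ℂ (M.map (algebraMap ℝ ℂ)), 0 < μ.re) :
    @IntegrableOn _ _ _ _
      (@SeminormedAddGroup.toContinuousENorm _
        Matrix.linftyOpNormedAddCommGroup.toSeminormedAddCommGroup.toSeminormedAddGroup)
      (fun s : ℝ => exp (-s • M) * (exp (-s • M))ᵀ) (Ioi 0) volume ∧
      ((∫ s in Ioi (0:ℝ), exp (-s • M) * (exp (-s • M))ᵀ).IsSymm ∧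
        (∫ s in Ioi (0:ℝ), exp (-s • M) * (exp (-s • M))ᵀ).PosDef) := by
  obtain ⟨a, ha, hspec⟩ := exists_pos_lt_re_of_spectrum _ hM
  have hcont : Continuous fun s : ℝ => exp (-s • M) * (exp (-s • M))ᵀ := by fun_prop
  have hint := integrableOn_Ioi_of_isBigO_exp_neg (a := 0) (by positivity) hcont
    (isBigO_exp_neg_smul_mul_transpose M hspec)
  have hpos := PosDef.integral (μ := volume.restrict (Ioi 0)) (by simp) hint
    (ae_of_all _ fun s => posDef_exp_mul_transpose _)
  exact ⟨hint, isHermitian_iff_isSymm.1 hpos.isHermitian, hpos⟩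
end

section
/- Let M be an n×n real matrix with ‖e^{-τM}‖ ≤ K e^{-λτ} (λ > 0), let m ∈ (0,1], let γ : [0,T] → ℝⁿ be α-Hölder with γ(0) = 0, α ∈ (0,1], and let z : [0,T] → ℝⁿ solve z(t) = ∫₀ᵗ e^{-(M/m)(t-r)} dγ(r) (Young/Riemann–Stieltjes integral). Then there is a constant C independent of m such that for all t ∈ [0,T] and δ ∈ (0,t], |z(t)| ≤ C(e^{-λδ/m} + δ^α). In particular, choosing δ = αm log(1/m)/λ, |z(t)| ≤ C m^α (1 + |log m|)^α. -/
/-!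
With `A = M / m`, the identity `∫₀ᵗ A e^{-(t-r)A} dr = 1 - e^{-tA}` rewrites
`z(t) = e^{-tA} γ(t) + ∫₀ᵗ A e^{-(t-r)A} (γ(t) - γ(r)) dr`.
The kernel `A e^{-(t-r)A}` decays at rate `λ/m`, so its total mass is at most
`K ‖A‖ / (λ/m) = K ‖M‖ / λ`, independently of `m`. On `[t - δ, t]` the Hölder bound gives
`|γ(t) - γ(r)| ≤ H δ^α`; on `[0, t - δ]` the increment is only bounded by `H T^α`, but there the
kernel carries the factor `e^{-λδ/m}`. The boundary term `e^{-tA} γ(t)` is split the same way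
according to whether `t ≤ δ`. Finally `δ = α m (1 + |log m|) / λ` makes `e^{-λδ/m} = e^{-α} m^α`
(as `|log m| = -log m`), while `δ^α` is `m^α (1 + |log m|)^α` up to a constant.
-/

open MeasureTheory Matrix Set NormedSpace intervalIntegral

attribute [local instance] Matrix.linftyOpNormedAddCommGroup Matrix.linftyOpNormedSpace
  Matrix.linftyOpNormedRing Matrix.linftyOpNormedAlgebra

theorem integral_exp_neg_mul_sub_le {β : ℝ} (hβ : 0 < β) (a b t : ℝ) :
    ∫ r in a..b, Real.exp (-β * (t - r)) ≤ Real.exp (-β * (t - b)) / β := by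
  have hrw : ∀ r, -β * (t - r) = β * r - β * t := fun r => by ring
  simp only [hrw, intervalIntegral.integral_comp_mul_sub (fun x => Real.exp x) hβ.ne', integral_exp,
    smul_eq_mul]
  rw [inv_mul_eq_div]
  gcongr
  linarith [Real.exp_pos (β * a - β * t)]

theorem rpow_mul_exp_neg_le {α β δ u T : ℝ} (hα : 0 ≤ α) (hβ : 0 ≤ β) (hδ : 0 ≤ δ)
    (hu : u ∈ Icc 0 T) :
    u ^ α * Real.exp (-β * u) ≤ T ^ α * Real.exp (-β * δ) + δ ^ α := by
  have hT : 0 ≤ T ^ α * Real.exp (-β * δ) :=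
    mul_nonneg (Real.rpow_nonneg (hu.1.trans hu.2) α) (Real.exp_pos _).le
  rcases le_or_gt δ u with hδu | huδ
  · have : u ^ α * Real.exp (-β * u) ≤ T ^ α * Real.exp (-β * δ) :=
      mul_le_mul (Real.rpow_le_rpow hu.1 hu.2 hα) (Real.exp_le_exp.2 (by nlinarith))
        (Real.exp_pos _).le (Real.rpow_nonneg (hu.1.trans hu.2) α)
    linarith [Real.rpow_nonneg hδ α]
  · have : u ^ α * Real.exp (-β * u) ≤ δ ^ α * 1 :=
      mul_le_mul (Real.rpow_le_rpow hu.1 huδ.le hα) (Real.exp_le_one_iff.2 (by nlinarith [hu.1]))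
        (Real.exp_pos _).le (Real.rpow_nonneg hδ α)
    linarith

open Filter Topology in
theorem continuousOn_of_norm_sub_le_mul_rpow {E : Type*} [SeminormedAddCommGroup E]
    {f : ℝ → E} {s : Set ℝ} {H α : ℝ} (hα : 0 < α)
    (hf : ∀ x ∈ s, ∀ y ∈ s, ‖f y - f x‖ ≤ H * |y - x| ^ α) : ContinuousOn f s := by
  intro x hx
  rw [ContinuousWithinAt, tendsto_iff_norm_sub_tendsto_zero]
  have hcont : Continuous fun y : ℝ => H * |y - x| ^ α :=
    continuous_const.mul ((Real.continuous_rpow_const hα.le).comp (by fun_prop))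
  have hlim : Tendsto (fun y => H * |y - x| ^ α) (𝓝[s] x) (𝓝 0) := by
    simpa [hα.ne'] using (hcont.tendsto x).mono_left nhdsWithin_le_nhds
  exact squeeze_zero' (Eventually.of_forall fun _ => norm_nonneg _)
    (eventually_nhdsWithin_of_forall fun y hy => hf x hx y hy) hlim

theorem ContinuousOn.matrix_mulVec {X R m n : Type*} [TopologicalSpace X] [TopologicalSpace R]
    [NonUnitalNonAssocSemiring R] [ContinuousAdd R] [ContinuousMul R] [Fintype n]
    {A : X → Matrix m n R} {v : X → n → R} {s : Set X} (hA : ContinuousOn A s)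
    (hv : ContinuousOn v s) : ContinuousOn (fun x => A x *ᵥ v x) s :=
  (continuous_fst.matrix_mulVec continuous_snd).comp_continuousOn (hA.prodMk hv)

section

variable {ι : Type*} [Fintype ι] [DecidableEq ι]

theorem hasDerivAt_exp_smul_sub_mulVec (A : Matrix ι ι ℝ) (v : ι → ℝ) (t r : ℝ) :
    HasDerivAt (fun r : ℝ => exp ((r - t) • A) *ᵥ v) ((A * exp ((r - t) • A)) *ᵥ v) r := by
  let L : Matrix ι ι ℝ →L[ℝ] ι → ℝ := LinearMap.toContinuousLinearMap ((mulVecBilin ℝ ℝ).flip v)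
  have hexp := (hasDerivAt_exp_smul_const' (𝕂 := ℝ) A (r - t)).comp_sub_const r t
  exact L.hasFDerivAt.comp_hasDerivAt r hexp

theorem integral_mul_exp_smul_mulVec (A : Matrix ι ι ℝ) (v : ι → ℝ) (t : ℝ) :
    ∫ r in (0:ℝ)..t, (A * exp ((r - t) • A)) *ᵥ v = v - exp ((-t) • A) *ᵥ v := by
  have hcont : Continuous fun r : ℝ => (A * exp ((r - t) • A)) *ᵥ v := by fun_prop
  rw [intervalIntegral.integral_eq_sub_of_hasDerivAt
    (fun r _ => hasDerivAt_exp_smul_sub_mulVec A v t r) (hcont.intervalIntegrable _ _)]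
  simp

theorem sub_integral_mul_exp_smul_mulVec (A : Matrix ι ι ℝ) {γ : ℝ → ι → ℝ} {t : ℝ}
    (hγ : ContinuousOn γ (uIcc 0 t)) :
    γ t - ∫ r in (0:ℝ)..t, (A * exp ((r - t) • A)) *ᵥ γ r =
      exp ((-t) • A) *ᵥ γ t + ∫ r in (0:ℝ)..t, (A * exp ((r - t) • A)) *ᵥ (γ t - γ r) := by
  have hker : Continuous fun r : ℝ => A * exp ((r - t) • A) := by fun_prop
  have hγint : IntervalIntegrable (fun r => (A * exp ((r - t) • A)) *ᵥ γ r) volume 0 t :=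
    (hker.continuousOn.matrix_mulVec hγ).intervalIntegrable
  simp only [mulVec_sub]
  rw [intervalIntegral.integral_sub ((hker.matrix_mulVec continuous_const).intervalIntegrable _ _)
    hγint, integral_mul_exp_smul_mulVec]
  abel

variable {A : Matrix ι ι ℝ} {K β : ℝ}

theorem nonneg_of_norm_exp_smul_le
    (hdecay : ∀ τ : ℝ, 0 ≤ τ → ‖exp (-τ • A)‖ ≤ K * Real.exp (-β * τ)) : 0 ≤ K := by
  simpa using (norm_nonneg _).trans (hdecay 0 le_rfl)

theorem norm_mul_exp_smul_le
    (hdecay : ∀ τ : ℝ, 0 ≤ τ → ‖exp (-τ • A)‖ ≤ K * Real.exp (-β * τ)) {r t : ℝ} (hrt : r ≤ t) :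
    ‖A * exp ((r - t) • A)‖ ≤ ‖A‖ * K * Real.exp (-β * (t - r)) :=
  calc ‖A * exp ((r - t) • A)‖ ≤ ‖A‖ * ‖exp (-(t - r) • A)‖ := by
        rw [neg_sub]; exact norm_mul_le _ _
    _ ≤ ‖A‖ * (K * Real.exp (-β * (t - r))) := by gcongr; exact hdecay _ (sub_nonneg.2 hrt)
    _ = ‖A‖ * K * Real.exp (-β * (t - r)) := by ring

theorem norm_integral_mul_exp_smul_mulVec_le
    (hdecay : ∀ τ : ℝ, 0 ≤ τ → ‖exp (-τ • A)‖ ≤ K * Real.exp (-β * τ)) (hβ : 0 < β)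
    {f : ℝ → ι → ℝ} {a b t B : ℝ} (hab : a ≤ b) (hbt : b ≤ t) (hf : ∀ r ∈ Icc a b, ‖f r‖ ≤ B) :
    ‖∫ r in a..b, (A * exp ((r - t) • A)) *ᵥ f r‖ ≤ ‖A‖ * K * B * Real.exp (-β * (t - b)) / β := by
  have hK := nonneg_of_norm_exp_smul_le hdecay
  have hB : 0 ≤ B := (norm_nonneg _).trans (hf a ⟨le_rfl, hab⟩)
  have hpt : ∀ r ∈ Ioc a b, ‖(A * exp ((r - t) • A)) *ᵥ f r‖ ≤
      ‖A‖ * K * B * Real.exp (-β * (t - r)) := fun r hr =>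
    calc ‖(A * exp ((r - t) • A)) *ᵥ f r‖ ≤ ‖A * exp ((r - t) • A)‖ * ‖f r‖ :=
          linfty_opNorm_mulVec _ _
      _ ≤ ‖A‖ * K * Real.exp (-β * (t - r)) * B := by
          gcongr
          · exact norm_mul_exp_smul_le hdecay (hr.2.trans hbt)
          · exact hf r (Ioc_subset_Icc_self hr)
      _ = ‖A‖ * K * B * Real.exp (-β * (t - r)) := by ring
  have hcont : Continuous fun r : ℝ => ‖A‖ * K * B * Real.exp (-β * (t - r)) := by fun_prop
  calc ‖∫ r in a..b, (A * exp ((r - t) • A)) *ᵥ f r‖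
      ≤ ∫ r in a..b, ‖A‖ * K * B * Real.exp (-β * (t - r)) :=
        intervalIntegral.norm_integral_le_of_norm_le hab (ae_of_all _ hpt)
          (hcont.intervalIntegrable _ _)
    _ ≤ ‖A‖ * K * B * (Real.exp (-β * (t - b)) / β) := by
        rw [intervalIntegral.integral_const_mul]
        gcongr
        exact integral_exp_neg_mul_sub_le hβ a b t
    _ = ‖A‖ * K * B * Real.exp (-β * (t - b)) / β := by ring

variable {γ : ℝ → ι → ℝ} {H α T t δ : ℝ}

theorem norm_integral_mul_exp_smul_mulVec_sub_le
    (hdecay : ∀ τ : ℝ, 0 ≤ τ → ‖exp (-τ • A)‖ ≤ K * Real.exp (-β * τ)) (hβ : 0 < β)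
    (hH : 0 ≤ H) (hα : 0 < α) (hδ : 0 < δ)
    (hγ : ∀ s ∈ Icc (0:ℝ) T, ∀ t ∈ Icc (0:ℝ) T, ‖γ t - γ s‖ ≤ H * |t - s| ^ α)
    (ht : t ∈ Icc 0 T) :
    ‖∫ r in (0:ℝ)..t, (A * exp ((r - t) • A)) *ᵥ (γ t - γ r)‖ ≤
      ‖A‖ * K * H / β * (T ^ α * Real.exp (-β * δ) + δ ^ α) := by
  have hK := nonneg_of_norm_exp_smul_le hdecay
  have hT : 0 ≤ T ^ α * Real.exp (-β * δ) :=
    mul_nonneg (Real.rpow_nonneg (ht.1.trans ht.2) α) (Real.exp_pos _).le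
  have hclose : ∀ r ∈ Icc 0 t, ∀ d, t - r ≤ d → ‖γ t - γ r‖ ≤ H * d ^ α := fun r hr d hd =>
    (hγ r ⟨hr.1, hr.2.trans ht.2⟩ t ht).trans (by gcongr; rw [abs_of_nonneg] <;> linarith [hr.2])
  rcases le_or_gt t δ with htδ | hδt
  · calc _ ≤ ‖A‖ * K * (H * δ ^ α) * Real.exp (-β * (t - t)) / β :=
          norm_integral_mul_exp_smul_mulVec_le hdecay hβ ht.1 le_rfl
            fun r hr => hclose r hr δ (by linarith [hr.1])
      _ = ‖A‖ * K * H / β * δ ^ α := by rw [sub_self, mul_zero, Real.exp_zero]; ring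
      _ ≤ ‖A‖ * K * H / β * (T ^ α * Real.exp (-β * δ) + δ ^ α) := by
          gcongr; exact le_add_of_nonneg_left hT
  · have hs : t - δ ∈ Icc 0 t := ⟨by linarith, by linarith⟩
    have hγc : ContinuousOn γ (Icc 0 t) :=
      (continuousOn_of_norm_sub_le_mul_rpow hα hγ).mono (Icc_subset_Icc_right ht.2)
    have hcont : ContinuousOn (fun r => (A * exp ((r - t) • A)) *ᵥ (γ t - γ r)) (Icc 0 t) :=
      (by fun_prop : Continuous fun r : ℝ => A * exp ((r - t) • A)).continuousOn.matrix_mulVec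
        (continuousOn_const.sub hγc)
    have hint : ∀ a ∈ Icc 0 t, ∀ b ∈ Icc 0 t,
        IntervalIntegrable (fun r => (A * exp ((r - t) • A)) *ᵥ (γ t - γ r)) volume a b :=
      fun a ha b hb => (hcont.mono (uIcc_subset_Icc ha hb)).intervalIntegrable
    rw [← intervalIntegral.integral_add_adjacent_intervals (hint 0 ⟨le_rfl, ht.1⟩ _ hs)
      (hint _ hs t ⟨ht.1, le_rfl⟩)]
    have hfar := norm_integral_mul_exp_smul_mulVec_le hdecay hβ hs.1 hs.2
      fun r hr => hclose r ⟨hr.1, hr.2.trans hs.2⟩ T (by linarith [hr.1, ht.2])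
    have hnear := norm_integral_mul_exp_smul_mulVec_le hdecay hβ hs.2 le_rfl
      fun r hr => hclose r ⟨hs.1.trans hr.1, hr.2⟩ δ (by linarith [hr.1])
    refine ((norm_add_le _ _).trans (add_le_add hfar hnear)).trans_eq ?_
    rw [sub_sub_cancel, sub_self, mul_zero, Real.exp_zero]
    ring

theorem norm_sub_integral_mul_exp_smul_mulVec_le
    (hdecay : ∀ τ : ℝ, 0 ≤ τ → ‖exp (-τ • A)‖ ≤ K * Real.exp (-β * τ)) (hβ : 0 < β)
    (hH : 0 ≤ H) (hα : 0 < α) (hδ : 0 < δ) (hγ0 : γ 0 = 0)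
    (hγ : ∀ s ∈ Icc (0:ℝ) T, ∀ t ∈ Icc (0:ℝ) T, ‖γ t - γ s‖ ≤ H * |t - s| ^ α)
    (ht : t ∈ Icc 0 T) :
    ‖γ t - ∫ r in (0:ℝ)..t, (A * exp ((r - t) • A)) *ᵥ γ r‖ ≤
      K * H * (1 + ‖A‖ / β) * (T ^ α * Real.exp (-β * δ) + δ ^ α) := by
  have hK := nonneg_of_norm_exp_smul_le hdecay
  have hγc : ContinuousOn γ (uIcc 0 t) :=
    (continuousOn_of_norm_sub_le_mul_rpow hα hγ).mono
      (by rw [uIcc_of_le ht.1]; exact Icc_subset_Icc_right ht.2)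
  have hγt : ‖γ t‖ ≤ H * t ^ α := by
    simpa [hγ0, abs_of_nonneg ht.1] using hγ 0 ⟨le_rfl, ht.1.trans ht.2⟩ t ht
  have hfree : ‖exp ((-t) • A) *ᵥ γ t‖ ≤ K * H * (T ^ α * Real.exp (-β * δ) + δ ^ α) :=
    calc ‖exp ((-t) • A) *ᵥ γ t‖ ≤ K * Real.exp (-β * t) * (H * t ^ α) :=
          (linfty_opNorm_mulVec _ _).trans (mul_le_mul (hdecay t ht.1) hγt (norm_nonneg _)
            (by positivity))
      _ = K * H * (t ^ α * Real.exp (-β * t)) := by ring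
      _ ≤ K * H * (T ^ α * Real.exp (-β * δ) + δ ^ α) := by
          gcongr; exact rpow_mul_exp_neg_le hα.le hβ.le hδ.le ht
  rw [sub_integral_mul_exp_smul_mulVec A hγc]
  refine ((norm_add_le _ _).trans (add_le_add hfree
    (norm_integral_mul_exp_smul_mulVec_sub_le hdecay hβ hH hα hδ hγ ht))).trans_eq ?_
  ring

theorem norm_sub_integral_smul_exp_smul_mulVec_le {M : Matrix ι ι ℝ} {lam m : ℝ}
    (hdecay : ∀ τ : ℝ, 0 ≤ τ → ‖exp (-τ • M)‖ ≤ K * Real.exp (-lam * τ)) (hlam : 0 < lam)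
    (hm : 0 < m) (hH : 0 ≤ H) (hα : 0 < α) (hδ : 0 < δ) (hγ0 : γ 0 = 0)
    (hγ : ∀ s ∈ Icc (0:ℝ) T, ∀ t ∈ Icc (0:ℝ) T, ‖γ t - γ s‖ ≤ H * |t - s| ^ α)
    (ht : t ∈ Icc 0 T) :
    ‖γ t - ∫ r in (0:ℝ)..t, ((m⁻¹ • M) * exp (-((t - r) / m) • M)) *ᵥ γ r‖ ≤
      K * H * (1 + ‖M‖ / lam) * (T ^ α + 1) * (Real.exp (-lam * δ / m) + δ ^ α) := by
  have hdecay' : ∀ τ : ℝ, 0 ≤ τ → ‖exp (-τ • (m⁻¹ • M))‖ ≤ K * Real.exp (-(lam / m) * τ) := by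
    intro τ hτ
    convert hdecay (τ / m) (by positivity) using 3
    · rw [smul_smul]; ring_nf
    · ring
  have hrescale : ∀ r, -((t - r) / m) • M = (r - t) • (m⁻¹ • M) := fun r => by
    rw [smul_smul]; ring_nf
  simp only [hrescale]
  have hnorm : ‖m⁻¹ • M‖ / (lam / m) = ‖M‖ / lam := by
    rw [norm_smul, norm_inv, Real.norm_of_nonneg hm.le]
    field_simp
  have hexp : -(lam / m) * δ = -lam * δ / m := by ring
  have hK := nonneg_of_norm_exp_smul_le hdecay
  have hTα : 0 ≤ T ^ α := Real.rpow_nonneg (ht.1.trans ht.2) α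
  have hδα : 0 ≤ δ ^ α := Real.rpow_nonneg hδ.le α
  refine ((norm_sub_integral_mul_exp_smul_mulVec_le hdecay' (div_pos hlam hm) hH hα hδ hγ0 hγ
    ht).trans_eq (by rw [hnorm, hexp])).trans ?_
  rw [mul_assoc _ (T ^ α + 1)]
  gcongr
  nlinarith [Real.exp_pos (-lam * δ / m)]

end

theorem exp_neg_add_rpow_le_of_eq_mul_log {lam α m δ : ℝ} (hlam : 0 < lam) (hα : 0 < α)
    (hm : m ∈ Ioc (0:ℝ) 1) (hδ : δ = α / lam * (m * (1 + |Real.log m|))) :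
    Real.exp (-lam * δ / m) + δ ^ α ≤ (1 + (α / lam) ^ α) * m ^ α * (1 + |Real.log m|) ^ α := by
  set L := 1 + |Real.log m| with hLdef
  have hL : 1 ≤ L := le_add_of_nonneg_right (abs_nonneg _)
  have hmα : 0 ≤ m ^ α := Real.rpow_nonneg hm.1.le α
  have hexp : Real.exp (-lam * δ / m) ≤ m ^ α * L ^ α :=
    calc Real.exp (-lam * δ / m) = Real.exp (-α) * m ^ α := by
          rw [Real.rpow_def_of_pos hm.1, ← Real.exp_add, hδ, hLdef,
            abs_of_nonpos (Real.log_nonpos hm.1.le hm.2)]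
          congr 1
          field_simp [hm.1.ne']
          ring
      _ ≤ 1 * m ^ α := by
          gcongr; exact Real.exp_le_one_iff.2 (neg_nonpos.2 hα.le)
      _ ≤ m ^ α * L ^ α := by
          rw [one_mul]; exact le_mul_of_one_le_right hmα (Real.one_le_rpow hL hα.le)
  have hδα : δ ^ α = (α / lam) ^ α * (m ^ α * L ^ α) := by
    rw [hδ, Real.mul_rpow (by positivity) (mul_nonneg hm.1.le (by linarith)),
      Real.mul_rpow hm.1.le (by linarith)]
  rw [hδα]
  linarith

/-- The Young integral `z t = ∫₀ᵗ e^{-(M/m)(t-r)} dγ(r)` is written integrated by parts,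
using `γ 0 = 0`. -/
theorem stmt11_general (n : ℕ) (M : Matrix (Fin n) (Fin n) ℝ) (K lam : ℝ)
    (hlam : 0 < lam)
    (hdecay : ∀ τ : ℝ, 0 ≤ τ → ‖NormedSpace.exp (-τ • M)‖ ≤ K * Real.exp (-lam * τ))
    (T : ℝ) (α : ℝ) (hα : α ∈ Ioc (0:ℝ) 1)
    (γ : ℝ → (Fin n → ℝ)) (hγ0 : γ 0 = 0) (Hγ : ℝ)
    (hγ : ∀ s ∈ Icc (0:ℝ) T, ∀ t ∈ Icc (0:ℝ) T, ‖γ t - γ s‖ ≤ Hγ * |t - s| ^ α) :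
    ∃ c : ℝ, ∀ m ∈ Ioc (0:ℝ) 1, ∀ z : ℝ → (Fin n → ℝ),
      (∀ t ∈ Icc (0:ℝ) T,
        z t = γ t - ∫ r in (0:ℝ)..t, ((m⁻¹ • M) * NormedSpace.exp (-((t - r) / m) • M)).mulVec (γ r)) →
      (∀ t ∈ Icc (0:ℝ) T, ∀ δ : ℝ, 0 < δ → δ ≤ t →
          ‖z t‖ ≤ c * (Real.exp (-lam * δ / m) + δ ^ α)) ∧
        (∀ t ∈ Icc (0:ℝ) T, ‖z t‖ ≤ c * m ^ α * (1 + |Real.log m|) ^ α) := by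
  have hγ' : ∀ s ∈ Icc (0:ℝ) T, ∀ t ∈ Icc (0:ℝ) T, ‖γ t - γ s‖ ≤ max Hγ 0 * |t - s| ^ α :=
    fun s hs t ht => (hγ s hs t ht).trans (by gcongr; exact le_max_left _ _)
  set C := K * max Hγ 0 * (1 + ‖M‖ / lam) * (T ^ α + 1)
  have hC : ∀ t ∈ Icc (0:ℝ) T, 0 ≤ C := fun t ht => by
    have := nonneg_of_norm_exp_smul_le hdecay
    have := Real.rpow_nonneg (ht.1.trans ht.2) α
    positivity
  refine ⟨C * (1 + (α / lam) ^ α), fun m hm z hz => ?_⟩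
  have key : ∀ t ∈ Icc (0:ℝ) T, ∀ δ : ℝ, 0 < δ → ‖z t‖ ≤ C * (Real.exp (-lam * δ / m) + δ ^ α) :=
    fun t ht δ hδ => hz t ht ▸ norm_sub_integral_smul_exp_smul_mulVec_le hdecay hlam hm.1
      (le_max_right _ _) hα.1 hδ hγ0 hγ' ht
  constructor
  · intro t ht δ hδ _
    refine (key t ht δ hδ).trans ?_
    rw [mul_assoc C]
    have hq := Real.rpow_nonneg (div_pos hα.1 hlam).le α
    exact mul_le_mul_of_nonneg_left (le_mul_of_one_le_left (by positivity) (by linarith))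
      (hC t ht)
  · intro t ht
    have hδ : 0 < α / lam * (m * (1 + |Real.log m|)) := by
      have := hm.1; have := hα.1; positivity
    refine ((key t ht _ hδ).trans (mul_le_mul_of_nonneg_left
      (exp_neg_add_rpow_le_of_eq_mul_log hlam hα.1 hm rfl) (hC t ht))).trans_eq ?_
    ring

/-- For `z(t) = ∫₀ᵗ e^{-(M/m)(t-r)} dγ(r)` with `γ` an `α`-Hölder
path, `γ(0) = 0`, one has `|z(t)| ≤ c (e^{-λδ/m} + δ^α)` for all `0 < δ ≤ t ≤ T`, with
`c` independent of `m ∈ (0,1]`; in particular `|z(t)| ≤ c m^α (1 + |log m|)^α`.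
(The Young integral defining `z` is encoded via integration by parts, using `γ(0)=0`:
`z(t) = γ(t) - ∫₀ᵗ (M/m) e^{-(M/m)(t-r)} γ(r) dr`.) -/
theorem stmt11 (n : ℕ) (M : Matrix (Fin n) (Fin n) ℝ) (K lam : ℝ)
    (hK : 0 < K) (hlam : 0 < lam)
    (hdecay : ∀ τ : ℝ, 0 ≤ τ → ‖NormedSpace.exp (-τ • M)‖ ≤ K * Real.exp (-lam * τ))
    (T : ℝ) (hT : 0 < T) (α : ℝ) (hα : α ∈ Ioc (0:ℝ) 1)
    (γ : ℝ → (Fin n → ℝ)) (hγ0 : γ 0 = 0) (Hγ : ℝ)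
    (hγ : ∀ s ∈ Icc (0:ℝ) T, ∀ t ∈ Icc (0:ℝ) T, ‖γ t - γ s‖ ≤ Hγ * |t - s| ^ α) :
    ∃ c : ℝ, ∀ m ∈ Ioc (0:ℝ) 1, ∀ z : ℝ → (Fin n → ℝ),
      (∀ t ∈ Icc (0:ℝ) T,
        z t = γ t - ∫ r in (0:ℝ)..t, ((m⁻¹ • M) * NormedSpace.exp (-((t - r) / m) • M)).mulVec (γ r)) →
      (∀ t ∈ Icc (0:ℝ) T, ∀ δ : ℝ, 0 < δ → δ ≤ t →
          ‖z t‖ ≤ c * (Real.exp (-lam * δ / m) + δ ^ α)) ∧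
        (∀ t ∈ Icc (0:ℝ) T, ‖z t‖ ≤ c * m ^ α * (1 + |Real.log m|) ^ α) :=
  stmt11_general n M K lam hlam hdecay T α hα γ hγ0 Hγ hγ
end
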